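/- Let T be an essentially small triangulated category in which every object is a finite direct sum of indecomposables, and suppose T is a block. Let M be indecomposable. Then the split t-structure (T^{≤0}_M, T^{≥0}_M) determined by M is bounded if and only if there is no path from M to M[-1]. -/

import Mathlib

/-!
STATEMENT 13: In the situation above, with `T` a block and `M` indecomposable, the split
t-structure `(T^{≤0}_M, T^{≥0}_M)` determined by `M` is bounded if and only if there is no
path from `M` to `M⟦-1⟧`.
-/
open CategoryTheory Category Limits Pretriangulated

section PathsAndBlocks

variable {C : Type*} [Category C] [Preadditive C] [HasZeroObject C] [HasShift C ℤ]
  [∀ n : ℤ, (shiftFunctor C n).Additive] [Pretriangulated C]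
  [HasBinaryBiproducts C] [HasFiniteBiproducts C]

/-- An object is indecomposable if it is non-zero and has no non-trivial
direct sum decomposition. -/
def IsIndec (X : C) : Prop :=
  ¬ IsZero X ∧ ∀ Y Z : C, (X ≅ Y ⊞ Z) → IsZero Y ∨ IsZero Z

/-- A single step of a path: both objects are indecomposable and either there is a
non-zero morphism `X ⟶ Y` or `Y = X⟦1⟧`. -/
def PathStep (X Y : C) : Prop :=
  IsIndec X ∧ IsIndec Y ∧ ((∃ f : X ⟶ Y, f ≠ 0) ∨ Nonempty (Y ≅ X⟦(1 : ℤ)⟧))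

/-- There is a path `X ⇝ Y`: a finite sequence of path steps. -/
def HasPath : C → C → Prop := Relation.ReflTransGen PathStep

/-- There is a walk from `X` to `Y`: a finite sequence of forward or backward path steps. -/
def HasWalk : C → C → Prop := Relation.ReflTransGen (fun X Y => PathStep X Y ∨ PathStep Y X)

/-- Every object is a finite direct sum of indecomposable objects. -/
def AllObjectsDecompose : Prop :=
  ∀ X : C, ∃ (n : ℕ) (G : Fin n → C), (∀ i, IsIndec (G i)) ∧ Nonempty (X ≅ ⨁ G)

variable (C) in
/-- A non-trivial decomposition of the triangulated category `C` into a product of two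
triangulated subcategories: two iso-closed, shift-closed classes of objects, each
containing a non-zero object, with no non-zero morphisms between them in either
direction, such that every object is a direct sum of an object of each. -/
def IsProductDecomp (P Q : C → Prop) : Prop :=
  (∀ {X Y : C}, (X ≅ Y) → P X → P Y) ∧ (∀ {X Y : C}, (X ≅ Y) → Q X → Q Y) ∧
  (∃ X, P X ∧ ¬ IsZero X) ∧ (∃ X, Q X ∧ ¬ IsZero X) ∧
  (∀ (X Y : C), P X → Q Y → ∀ f : X ⟶ Y, f = 0) ∧
  (∀ (X Y : C), Q X → P Y → ∀ f : X ⟶ Y, f = 0) ∧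
  (∀ (X : C) (n : ℤ), P X → P (X⟦n⟧)) ∧ (∀ (X : C) (n : ℤ), Q X → Q (X⟦n⟧)) ∧
  (∀ X : C, ∃ X' X'' : C, P X' ∧ Q X'' ∧ Nonempty (X ≅ X' ⊞ X''))

variable (C) in
/-- `C` is a block: it admits no non-trivial product decomposition. -/
def IsBlock : Prop := ¬ ∃ P Q : C → Prop, IsProductDecomp C P Q

end PathsAndBlocks

/-- `X` lies in the additive closure of the class `S` of objects. -/
def memAdd {C : Type*} [Category C] [Preadditive C] [HasBinaryBiproducts C]
    [HasFiniteBiproducts C] (S : C → Prop) (X : C) : Prop :=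
  ∃ (n : ℕ) (G : Fin n → C) (_ : ∀ i, S (G i)) (Z : C), Nonempty ((X ⊞ Z) ≅ ⨁ G)

/-!
Paths are invariant under shifts, and when every object is a finite sum of indecomposables a
path step `U → V` can be reversed up to a shift, `V ⇝ U⟦1⟧`: a non-zero `f : U ⟶ V` either
factors through an indecomposable summand of its cone, or the cone splits in such a way that
`f` has a non-zero inner inverse `V ⟶ U`. Hence the indecomposables `X` with a path
`M ⇝ X⟦k⟧` for some `k` span one factor of a product decomposition of the category; in a block
they are all indecomposables, and each of them also has a path back to a shift of `M`.

If `M ⇝ M⟦-1⟧`, then `M` has paths to all its negative shifts, which keeps `M` out of every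
`T^{≥-n}`. Otherwise the shifts `X⟦j⟧` reachable from `M` are bounded below, so each
indecomposable, hence each object, lies in some `T^{≤n} ∩ T^{≥-n}`.
-/

open Triangulated Filter

section Shift

variable {C : Type*} [Category C] [Preadditive C] [HasShift C ℤ]

lemma isZero_shift_iff (X : C) (k : ℤ) : IsZero (X⟦k⟧) ↔ IsZero X :=
  ⟨fun h => ((shiftFunctor C (-k)).map_isZero h).of_iso (shiftShiftNeg X k).symm,
    (shiftFunctor C k).map_isZero⟩

end Shift

section Paths

variable {C : Type*} [Category C] [Preadditive C] [HasBinaryBiproducts C]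

lemma IsIndec.of_iso {X Y : C} (hX : IsIndec X) (e : X ≅ Y) : IsIndec Y :=
  ⟨fun h => hX.1 (h.of_iso e), fun _ _ e' => hX.2 _ _ (e ≪≫ e')⟩

variable [HasShift C ℤ]

lemma pathStep_of_ne_zero {X Y : C} (hX : IsIndec X) (hY : IsIndec Y) {f : X ⟶ Y}
    (hf : f ≠ 0) : PathStep X Y :=
  ⟨hX, hY, Or.inl ⟨f, hf⟩⟩

lemma pathStep_of_iso {X Y : C} (hX : IsIndec X) (e : X ≅ Y) : PathStep X Y :=
  pathStep_of_ne_zero hX (hX.of_iso e) (f := e.hom) fun h => hX.1 <| by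
    rw [IsZero.iff_id_eq_zero, ← e.hom_inv_id, h, zero_comp]

lemma HasPath.isIndec {X Y : C} (h : HasPath X Y) (hX : IsIndec X) : IsIndec Y := by
  induction h with
  | refl => exact hX
  | tail _ hst _ => exact hst.2.1

lemma HasPath.of_iso_right {X A B : C} (h : HasPath X A) (hX : IsIndec X) (e : A ≅ B) :
    HasPath X B :=
  h.tail (pathStep_of_iso (h.isIndec hX) e)

lemma hasPath_shift_zero {X : C} (hX : IsIndec X) : HasPath X (X⟦(0 : ℤ)⟧) :=
  Relation.ReflTransGen.single (pathStep_of_iso hX ((shiftFunctorZero C ℤ).app X).symm)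

lemma hasPath_shift_shift_iff {M : C} (hM : IsIndec M) (X : C) (a b : ℤ) :
    HasPath M (X⟦a⟧⟦b⟧) ↔ HasPath M (X⟦a + b⟧) :=
  ⟨fun h => h.of_iso_right hM ((shiftFunctorAdd C a b).app X).symm,
    fun h => h.of_iso_right hM ((shiftFunctorAdd C a b).app X)⟩

lemma exists_hasPath_shift_shift_iff {M : C} (hM : IsIndec M) (X : C) (n : ℤ) :
    (∃ k : ℤ, HasPath M (X⟦n⟧⟦k⟧)) ↔ ∃ k : ℤ, HasPath M (X⟦k⟧) := by
  simp only [hasPath_shift_shift_iff hM]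
  exact ⟨fun ⟨k, h⟩ => ⟨n + k, h⟩, fun ⟨k, h⟩ => ⟨k - n, by rwa [add_sub_cancel]⟩⟩

variable [∀ n : ℤ, (shiftFunctor C n).Additive]

instance (k : ℤ) : PreservesBinaryBiproducts (shiftFunctor C k) :=
  preservesBinaryBiproducts_of_preservesBiproducts _

lemma IsIndec.shift {X : C} (hX : IsIndec X) (k : ℤ) : IsIndec (X⟦k⟧) := by
  refine ⟨(isZero_shift_iff X k).not.2 hX.1, fun Y Z e => ?_⟩
  have e' : X ≅ Y⟦-k⟧ ⊞ Z⟦-k⟧ :=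
    (shiftShiftNeg X k).symm ≪≫ (shiftFunctor C (-k)).mapIso e ≪≫
      (shiftFunctor C (-k)).mapBiprod Y Z
  simpa only [isZero_shift_iff] using hX.2 _ _ e'

lemma pathStep_shift_one {X : C} (hX : IsIndec X) : PathStep X (X⟦(1 : ℤ)⟧) :=
  ⟨hX, hX.shift 1, Or.inr ⟨Iso.refl _⟩⟩

lemma PathStep.shift {X Y : C} (h : PathStep X Y) (k : ℤ) : PathStep (X⟦k⟧) (Y⟦k⟧) := by
  obtain ⟨hX, hY, ⟨f, hf⟩ | ⟨⟨e⟩⟩⟩ := h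
  · exact pathStep_of_ne_zero (hX.shift k) (hY.shift k) (f := f⟦k⟧')
      (by rwa [Ne, Functor.map_eq_zero_iff])
  · exact ⟨hX.shift k, hY.shift k, Or.inr ⟨(shiftFunctor C k).mapIso e ≪≫ shiftComm X 1 k⟩⟩

lemma HasPath.shift {X Y : C} (h : HasPath X Y) (k : ℤ) : HasPath (X⟦k⟧) (Y⟦k⟧) :=
  Relation.ReflTransGen.lift (r := PathStep) (p := PathStep) (fun A => A⟦k⟧)
    (fun _ _ hst => hst.shift k) _ _ h

lemma HasPath.shift_mono {M X : C} (hM : IsIndec M) {j j' : ℤ} (h : HasPath M (X⟦j⟧))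
    (hjj' : j ≤ j') : HasPath M (X⟦j'⟧) := by
  induction j', hjj' using Int.leInduction with
  | base => exact h
  | succ n _ ih =>
    exact (hasPath_shift_shift_iff hM X n 1).1 (ih.tail (pathStep_shift_one (ih.isIndec hM)))

lemma HasPath.shift_of_loop {M : C} (h : HasPath M (M⟦(-1 : ℤ)⟧)) (hM : IsIndec M) {k : ℤ}
    (hk : k ≤ 0) : HasPath M (M⟦k⟧) := by
  induction k, hk using Int.leInductionDown with
  | base => exact hasPath_shift_zero hM
  | pred n _ ih =>
    rw [sub_eq_neg_add, ← hasPath_shift_shift_iff hM]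
    exact ih.trans (h.shift n)

end Paths

section Biproducts

variable {C : Type*} [Category C] [Preadditive C] [HasFiniteBiproducts C]

lemma biproduct.fromSubtype_toSubtype_eq_zero {J : Type} [Finite J] (f : J → C)
    {p q : J → Prop} [DecidablePred p] (hpq : ∀ j, q j → ¬ p j) :
    biproduct.fromSubtype f p ≫ biproduct.toSubtype f q = 0 :=
  biproduct.hom_ext _ _ fun j => by
    simp only [Category.assoc, biproduct.toSubtype_π, zero_comp]
    exact (biproduct.fromSubtype_π f p j).trans (dif_neg (hpq j j.2))

end Biproducts

section AdditiveClosure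

open ZeroObject

variable {C : Type*} [Category C] [Preadditive C] [HasBinaryBiproducts C] [HasFiniteBiproducts C]

lemma memAdd_iso {S : C → Prop} {X Y : C} (e : X ≅ Y) (h : memAdd S X) : memAdd S Y := by
  obtain ⟨n, G, hG, Z, ⟨φ⟩⟩ := h
  exact ⟨n, G, hG, Z, ⟨biprod.mapIso e.symm (Iso.refl Z) ≪≫ φ⟩⟩

lemma memAdd_biproduct {S : C → Prop} {J : Type} [Fintype J] (G : J → C) (hG : ∀ j, S (G j)) :
    memAdd S (⨁ G) := by
  let e := Fintype.equivFin J
  exact ⟨_, G ∘ e.symm, fun _ => hG _, 0, ⟨(isoBiprodZero (isZero_zero C)).symm ≪≫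
    biproduct.whiskerEquiv e fun j => eqToIso (by simp)⟩⟩

lemma memAdd_of_mem {S : C → Prop} {X : C} (hX : S X) : memAdd S X :=
  memAdd_iso (biproductUniqueIso fun _ : Unit => X) (memAdd_biproduct _ fun _ => hX)

lemma memAdd_hom_eq_zero {S S' : C → Prop}
    (hzero : ∀ U V : C, S U → S' V → ∀ f : U ⟶ V, f = 0)
    {X Y : C} (hX : memAdd S X) (hY : memAdd S' Y) (f : X ⟶ Y) : f = 0 := by
  obtain ⟨n, G, hG, Z, ⟨φ⟩⟩ := hX
  obtain ⟨m, H, hH, W, ⟨ψ⟩⟩ := hY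
  have hF : φ.inv ≫ biprod.fst ≫ f ≫ biprod.inl ≫ ψ.hom = 0 :=
    biproduct.hom_ext' _ _ fun i => biproduct.hom_ext _ _ fun j => by
      simpa only [Category.assoc, comp_zero, zero_comp] using hzero _ _ (hG i) (hH j) _
  calc f = biprod.inl ≫ φ.hom ≫ (φ.inv ≫ biprod.fst ≫ f ≫ biprod.inl ≫ ψ.hom) ≫ ψ.inv ≫
        biprod.fst := by simp
    _ = 0 := by simp only [hF, zero_comp, comp_zero]

lemma exists_ne_zero_of_memAdd {S : C → Prop} {X : C} (hX : ¬ IsZero X) (h : memAdd S X) :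
    ∃ W, S W ∧ ∃ a : X ⟶ W, a ≠ 0 := by
  obtain ⟨n, G, hG, Z, ⟨φ⟩⟩ := h
  by_contra! hzero
  have hι : (biprod.inl ≫ φ.hom : X ⟶ ⨁ G) = 0 :=
    biproduct.hom_ext _ _ fun i => by rw [zero_comp]; exact hzero (G i) (hG i) _
  refine hX ((IsZero.iff_id_eq_zero X).2 ?_)
  calc 𝟙 X = (biprod.inl ≫ φ.hom) ≫ φ.inv ≫ biprod.fst := by simp
    _ = 0 := by rw [hι, zero_comp]

noncomputable def biproductIsoBiprodSubtype {J : Type} [Finite J] (f : J → C) (p : J → Prop)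
    [DecidablePred p] :
    ⨁ f ≅ (⨁ Subtype.restrict p f) ⊞ (⨁ Subtype.restrict (fun j => ¬ p j) f) where
  hom := biprod.lift (biproduct.toSubtype f p) (biproduct.toSubtype f _)
  inv := biprod.desc (biproduct.fromSubtype f p) (biproduct.fromSubtype f _)
  hom_inv_id := by
    refine biproduct.hom_ext' _ _ fun i => ?_
    by_cases hi : p i <;> simp [hi]
  inv_hom_id := by
    apply biprod.hom_ext' <;> apply biprod.hom_ext <;>
      simp only [biprod.inl_desc_assoc, biprod.inr_desc_assoc, Category.assoc, biprod.lift_fst,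
        biprod.lift_snd, Category.comp_id, biprod.inl_fst, biprod.inl_snd, biprod.inr_fst,
        biprod.inr_snd, biproduct.fromSubtype_toSubtype] <;>
      exact biproduct.fromSubtype_toSubtype_eq_zero f fun j hj hj' => by simp_all

variable [HasShift C ℤ] [∀ n : ℤ, (shiftFunctor C n).Additive]

lemma memAdd_shift_of_iso_biproduct {S : C → Prop} {X : C} {n : ℕ} {G : Fin n → C}
    (φ : X ≅ ⨁ G) (k : ℤ) (hG : ∀ i, S ((G i)⟦k⟧)) : memAdd S (X⟦k⟧) :=
  memAdd_iso ((shiftFunctor C k).mapIso φ ≪≫ (shiftFunctor C k).mapBiproduct G).symm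
    (memAdd_biproduct _ hG)

lemma memAdd_shift {S : C → Prop} (hS : ∀ (W : C) (k : ℤ), S W → S (W⟦k⟧)) {X : C} (k : ℤ)
    (h : memAdd S X) : memAdd S (X⟦k⟧) := by
  obtain ⟨n, G, hG, Z, ⟨φ⟩⟩ := h
  exact ⟨n, fun i => (G i)⟦k⟧, fun i => hS _ _ (hG i), Z⟦k⟧,
    ⟨((shiftFunctor C k).mapBiprod X Z).symm ≪≫ (shiftFunctor C k).mapIso φ ≪≫
      (shiftFunctor C k).mapBiproduct G⟩⟩

lemma not_hasPath_shift_neg_one_of_memAdd {M X : C} (hX : IsIndec X)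
    (h : memAdd (fun Z => IsIndec Z ∧ ¬ HasPath M (Z⟦(-1 : ℤ)⟧)) X) :
    ¬ HasPath M (X⟦(-1 : ℤ)⟧) := by
  obtain ⟨W, ⟨hW, hWM⟩, a, ha⟩ := exists_ne_zero_of_memAdd hX.1 h
  exact fun hXM => hWM (hXM.tail ((pathStep_of_ne_zero hX hW ha).shift (-1)))

end AdditiveClosure

section Triangles

variable {C : Type*} [Category C] [Preadditive C] [HasZeroObject C] [HasShift C ℤ]
  [∀ n : ℤ, (shiftFunctor C n).Additive] [Pretriangulated C]

lemma CategoryTheory.Pretriangulated.exists_mor₁_comp_comp_mor₁_eq {T : Triangle C}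
    (hT : T ∈ distTriang C) (q : T.obj₃ ⟶ T.obj₃) (hq₂ : T.mor₂ ≫ q = 0)
    (hq₃ : q ≫ T.mor₃ = T.mor₃) : ∃ s : T.obj₂ ⟶ T.obj₁, T.mor₁ ≫ s ≫ T.mor₁ = T.mor₁ := by
  obtain ⟨u, hu⟩ := T.coyoneda_exact₃ hT (𝟙 _ - q) (by simp [hq₃])
  have hgug : T.mor₂ ≫ u ≫ T.mor₂ = T.mor₂ := by
    rw [← hu, Preadditive.comp_sub, hq₂, Category.comp_id, sub_zero]
  obtain ⟨s, hs⟩ := T.coyoneda_exact₂ hT (𝟙 _ - T.mor₂ ≫ u) (by simp [hgug])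
  refine ⟨s, ?_⟩
  rw [← hs, Preadditive.comp_sub, comp_distTriang_mor_zero₁₂_assoc _ hT, Category.comp_id,
    zero_comp, sub_zero]

end Triangles

section Decomposable

variable {C : Type*} [Category C] [Preadditive C] [HasFiniteBiproducts C]

lemma exists_comp_eq_zero_comp_eq_of_biproduct {X Z W : C} {J : Type} [Fintype J]
    {G : J → C} (φ : Z ≅ ⨁ G) (g : X ⟶ Z) (h : Z ⟶ W)
    (hgh : ∀ i, g ≫ φ.hom ≫ biproduct.π G i = 0 ∨ biproduct.ι G i ≫ φ.inv ≫ h = 0) :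
    ∃ q : Z ⟶ Z, g ≫ q = 0 ∧ q ≫ h = h := by
  classical
  let E := biproduct.map fun i => if g ≫ φ.hom ≫ biproduct.π G i = 0 then 𝟙 (G i) else 0
  refine ⟨φ.hom ≫ E ≫ φ.inv, ?_, ?_⟩
  · suffices g ≫ φ.hom ≫ E = 0 by simp [reassoc_of% this]
    refine biproduct.hom_ext _ _ fun i => ?_
    by_cases hi : g ≫ φ.hom ≫ biproduct.π G i = 0 <;> simp [E, hi]
  · suffices E ≫ φ.inv ≫ h = φ.inv ≫ h by simp [this]
    refine biproduct.hom_ext' _ _ fun i => ?_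
    by_cases hi : g ≫ φ.hom ≫ biproduct.π G i = 0
    · simp [E, hi]
    · simp [E, hi, (hgh i).resolve_left hi]

end Decomposable

section Block

variable {C : Type*} [Category C] [Preadditive C] [HasZeroObject C] [HasShift C ℤ]
  [∀ n : ℤ, (shiftFunctor C n).Additive] [Pretriangulated C]
  [HasBinaryBiproducts C] [HasFiniteBiproducts C]

/-- Complete `f` to a triangle `Y → X → Z → Y⟦1⟧`. Either `X → Z → Y⟦1⟧` passes non-trivially
through an indecomposable summand of `Z`, or the summands of `Z` not reached from `X` carry all
of `Z → Y⟦1⟧`; then `f` has an inner inverse `s : X ⟶ Y`, necessarily non-zero. -/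
lemma hasPath_shift_one_of_ne_zero (hdec : AllObjectsDecompose (C := C)) {X Y : C}
    (hX : IsIndec X) (hY : IsIndec Y) {f : Y ⟶ X} (hf : f ≠ 0) : HasPath X (Y⟦(1 : ℤ)⟧) := by
  obtain ⟨Z, g, h, hT⟩ := distinguished_cocone_triangle f
  obtain ⟨n, G, hG, ⟨φ⟩⟩ := hdec Z
  by_cases hthrough :
      ∃ i, g ≫ φ.hom ≫ biproduct.π G i ≠ 0 ∧ biproduct.ι G i ≫ φ.inv ≫ h ≠ 0
  · obtain ⟨i, hgi, hhi⟩ := hthrough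
    exact .tail (.single (pathStep_of_ne_zero hX (hG i) hgi))
      (pathStep_of_ne_zero (hG i) (hY.shift 1) hhi)
  · push Not at hthrough
    obtain ⟨q, hgq, hqh⟩ :=
      exists_comp_eq_zero_comp_eq_of_biproduct φ g h fun i => or_iff_not_imp_left.2 (hthrough i)
    obtain ⟨s, hs⟩ := exists_mor₁_comp_comp_mor₁_eq hT q hgq hqh
    have hs0 : s ≠ 0 := by
      rintro rfl
      rw [zero_comp, comp_zero] at hs
      exact hf hs.symm
    exact .tail (.single (pathStep_of_ne_zero hX hY hs0)) (pathStep_shift_one hY)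

lemma PathStep.reverse (hdec : AllObjectsDecompose (C := C)) {X Y : C} (h : PathStep X Y) :
    HasPath Y (X⟦(1 : ℤ)⟧) := by
  obtain ⟨hX, hY, ⟨f, hf⟩ | ⟨⟨e⟩⟩⟩ := h
  · exact hasPath_shift_one_of_ne_zero hdec hY hX hf
  · exact .single (pathStep_of_iso hY e)

lemma HasPath.exists_reverse (hdec : AllObjectsDecompose (C := C)) {X Y : C}
    (h : HasPath X Y) (hX : IsIndec X) : ∃ r : ℤ, HasPath Y (X⟦r⟧) := by
  induction h with
  | refl => exact ⟨0, hasPath_shift_zero hX⟩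
  | @tail A B _ hAB ih =>
    obtain ⟨r, hr⟩ := ih
    exact ⟨r + 1, (hasPath_shift_shift_iff hAB.2.1 X r 1).1 ((hAB.reverse hdec).trans (hr.shift 1))⟩

lemma exists_hasPath_shift_of_isBlock (hdec : AllObjectsDecompose (C := C))
    (hblock : IsBlock C) {M X : C} (hM : IsIndec M) (hX : IsIndec X) :
    ∃ k : ℤ, HasPath M (X⟦k⟧) := by
  classical
  by_contra hXM
  let reached : C → Prop := fun W => ∃ k : ℤ, HasPath M (W⟦k⟧)
  refine hblock ⟨memAdd fun W => IsIndec W ∧ reached W, memAdd fun W => IsIndec W ∧ ¬ reached W,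
    fun e => memAdd_iso e, fun e => memAdd_iso e,
    ⟨M, memAdd_of_mem ⟨hM, 0, hasPath_shift_zero hM⟩, hM.1⟩, ⟨X, memAdd_of_mem ⟨hX, hXM⟩, hX.1⟩,
    fun _ _ => memAdd_hom_eq_zero ?_, fun _ _ => memAdd_hom_eq_zero ?_,
    fun _ n => memAdd_shift ?_ n, fun _ n => memAdd_shift ?_ n, fun Y => ?_⟩
  · rintro U V ⟨hU, k, hk⟩ ⟨hV, hVM⟩ f
    by_contra hf
    exact hVM ⟨k, hk.tail ((pathStep_of_ne_zero hU hV hf).shift k)⟩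
  · rintro U V ⟨hU, hUM⟩ ⟨hV, k, hk⟩ f
    by_contra hf
    exact hUM ⟨1 + k, (hasPath_shift_shift_iff hM U 1 k).1
      (hk.trans (((pathStep_of_ne_zero hU hV hf).reverse hdec).shift k))⟩
  · exact fun W n ⟨hW, hWM⟩ => ⟨hW.shift n, (exists_hasPath_shift_shift_iff hM W n).2 hWM⟩
  · exact fun W n ⟨hW, hWM⟩ => ⟨hW.shift n, (exists_hasPath_shift_shift_iff hM W n).not.2 hWM⟩
  · obtain ⟨n, G, hG, ⟨φ⟩⟩ := hdec Y
    let p : Fin n → Prop := fun i => reached (G i)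
    exact ⟨_, _, memAdd_biproduct (Subtype.restrict p G) fun j => ⟨hG j, j.2⟩,
      memAdd_biproduct (Subtype.restrict (fun i => ¬ p i) G) fun j => ⟨hG j, j.2⟩,
      ⟨φ ≪≫ biproductIsoBiprodSubtype G p⟩⟩

lemma exists_forall_le_not_hasPath_shift (hdec : AllObjectsDecompose (C := C)) {M X : C}
    (hM : IsIndec M) (hloop : ¬ HasPath M (M⟦(-1 : ℤ)⟧)) {k : ℤ} (hk : HasPath M (X⟦k⟧)) :
    ∃ b : ℤ, ∀ j ≤ b, ¬ HasPath M (X⟦j⟧) := by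
  obtain ⟨r, hr⟩ := hk.exists_reverse hdec hM
  refine ⟨k - r - 1, fun j hj hXj => hloop ?_⟩
  have hXj' : HasPath M (X⟦k⟧⟦j - k⟧) := by
    rwa [hasPath_shift_shift_iff hM, add_sub_cancel]
  have hMM : HasPath M (M⟦r + (j - k)⟧) :=
    (hasPath_shift_shift_iff hM M r (j - k)).1 (hXj'.trans (hr.shift (j - k)))
  exact hMM.shift_mono hM (by omega)

lemma eventually_hasPath_shift_and_not_hasPath_shift_neg (hdec : AllObjectsDecompose (C := C))
    (hblock : IsBlock C) {M X : C} (hM : IsIndec M) (hloop : ¬ HasPath M (M⟦(-1 : ℤ)⟧))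
    (hX : IsIndec X) :
    ∀ᶠ n : ℕ in atTop, HasPath M (X⟦(n : ℤ)⟧) ∧ ¬ HasPath M (X⟦-(n : ℤ)⟧⟦(-1 : ℤ)⟧) := by
  obtain ⟨k, hk⟩ := exists_hasPath_shift_of_isBlock hdec hblock hM hX
  obtain ⟨b, hb⟩ := exists_forall_le_not_hasPath_shift hdec hM hloop hk
  filter_upwards [eventually_ge_atTop k.toNat, eventually_ge_atTop (-b).toNat] with n hkn hbn
  rw [hasPath_shift_shift_iff hM]
  exact ⟨hk.shift_mono hM (by omega), hb _ (by omega)⟩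

end Block

open Triangulated in
theorem bounded_iff_no_path_to_negative_shift
    {C : Type*} [Category C] [Preadditive C] [HasZeroObject C] [HasShift C ℤ]
    [∀ n : ℤ, (shiftFunctor C n).Additive] [Pretriangulated C]
    [HasBinaryBiproducts C] [HasFiniteBiproducts C] [EssentiallySmall C]
    (hdec : AllObjectsDecompose (C := C)) (hblock : IsBlock C) (M : C) (hM : IsIndec M)
    (t : TStructure C)
    (hLE : ∀ X : C, t.le 0 X ↔ memAdd (fun Y => IsIndec Y ∧ HasPath M Y) X)
    (hGE : ∀ X : C, t.ge 0 X ↔ memAdd (fun Z => IsIndec Z ∧ ¬ HasPath M (Z⟦(-1 : ℤ)⟧)) X) :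
    (∀ X : C, ∃ n : ℕ, t.le n X ∧ t.ge (-(n : ℤ)) X) ↔ ¬ HasPath M (M⟦(-1 : ℤ)⟧) := by
  have le_iff (n : ℤ) (X : C) : t.le n X ↔ t.le 0 (X⟦n⟧) := by
    rw [← t.shift_le n 0 n (add_zero n), ObjectProperty.prop_shift_iff]
  have ge_iff (n : ℤ) (X : C) : t.ge n X ↔ t.ge 0 (X⟦n⟧) := by
    rw [← t.shift_ge n 0 n (add_zero n), ObjectProperty.prop_shift_iff]
  constructor
  · intro hbdd hloop
    obtain ⟨n, -, hge⟩ := hbdd M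
    rw [ge_iff, hGE] at hge
    refine not_hasPath_shift_neg_one_of_memAdd (hM.shift _) hge ?_
    rw [hasPath_shift_shift_iff hM]
    exact hloop.shift_of_loop hM (by omega)
  · intro hloop X
    obtain ⟨m, G, hG, ⟨φ⟩⟩ := hdec X
    obtain ⟨n, hn⟩ := (eventually_all.2 fun i =>
      eventually_hasPath_shift_and_not_hasPath_shift_neg hdec hblock hM hloop (hG i)).exists
    refine ⟨n, (le_iff _ X).2 ((hLE _).2 ?_), (ge_iff _ X).2 ((hGE _).2 ?_)⟩
    · exact memAdd_shift_of_iso_biproduct φ _ fun i => ⟨(hG i).shift _, (hn i).1⟩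
    · exact memAdd_shift_of_iso_biproduct φ _ fun i => ⟨(hG i).shift _, (hn i).2⟩
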